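/- Let F : ℝ^n → ℝ be convex, differentiable, with F(0) ≤ 0, and L-smooth: F(x+y) ≤ F(x) + ⟨∇F(x), y⟩ + (L/2)‖y‖² for all x, y. Let (s_t)_{t=1}^T and (m_t)_{t=1}^T be sequences of vectors, set S_t = s_1 + ... + s_t with S_0 = 0, and let 0 < η_t ≤ η_{t-1} be decreasing positive step sizes. If the Blackwell condition ⟨∇F(η_t(S_{t-1} + m_t)), s_t⟩ ≤ 0 holds for all 1 ≤ t ≤ T, then F(η_T · S_T) ≤ (L/2) ∑_{t=1}^T η_T η_t ‖s_t − m_t‖². -/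

import Mathlib

/-!
The potential `Φ t = F (η t • S t) / η t` grows by at most `L / 2 * η t * ‖s t - m t‖ ^ 2` per
round, and `Φ 0 ≤ 0` because `F 0 ≤ 0`. For one round, smoothness at the optimistic point
`x = η t • (S (t - 1) + m t)` combined with the gradient inequality at `x` gives
`F (η t • S t) ≤ F (η t • S (t - 1)) + η t * ⟪∇F x, s t⟫ + L / 2 * η t ^ 2 * ‖s t - m t‖ ^ 2`;
the Blackwell condition removes the inner product, and since `F` is convex with `F 0 ≤ 0` and
`η t ≤ η (t - 1)`, shrinking the argument gives
`F (η t • S (t - 1)) ≤ η t / η (t - 1) * F (η (t - 1) • S (t - 1))`.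
-/

open RealInnerProductSpace

theorem ConvexOn.add_fderiv_le {E : Type*} [NormedAddCommGroup E] [NormedSpace ℝ E]
    {f : E → ℝ} {f' : E →L[ℝ] ℝ} {x : E} (hf : ConvexOn ℝ Set.univ f)
    (hx : HasFDerivAt f f' x) (z : E) : f x + f' (z - x) ≤ f z := by
  let ℓ : ℝ →ᵃ[ℝ] E := AffineMap.lineMap x z
  have hline : ConvexOn ℝ Set.univ (f ∘ ℓ) :=
    (hf.comp_affineMap ℓ).subset (Set.subset_univ _) convex_univ
  have hderiv : HasDerivAt (f ∘ ℓ) (f' (z - x)) 0 := by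
    have hx0 : HasFDerivAt f f' (ℓ 0) := by simpa [ℓ] using hx
    exact hx0.comp_hasDerivAt 0 AffineMap.hasDerivAt_lineMap
  have hslope : slope (f ∘ ℓ) 0 1 = f z - f x := by simp [slope_def_field, ℓ]
  have hderiv_le := hline.le_slope_of_hasDerivWithinAt (Set.mem_univ 0) (Set.mem_univ 1) one_pos
    hderiv.hasDerivWithinAt
  linarith [hderiv_le.trans_eq hslope]

theorem ConvexOn.apply_smul_le_smul_apply {E : Type*} [AddCommGroup E] [Module ℝ E] {f : E → ℝ}
    (hf : ConvexOn ℝ Set.univ f) (h0 : f 0 ≤ 0) {c : ℝ} (hc0 : 0 ≤ c) (hc1 : c ≤ 1) (x : E) :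
    f (c • x) ≤ c * f x := by
  have := hf.2 (Set.mem_univ x) (Set.mem_univ 0) hc0 (sub_nonneg.2 hc1) (add_sub_cancel c 1)
  simp only [smul_zero, add_zero, smul_eq_mul] at this
  linarith [mul_nonpos_of_nonneg_of_nonpos (sub_nonneg.2 hc1) h0]

section

variable {E : Type*} [NormedAddCommGroup E] [InnerProductSpace ℝ E] [CompleteSpace E]
  {F : E → ℝ} {g : E → E} {L : ℝ}

theorem ConvexOn.apply_le_add_inner_add_sq_norm (hconv : ConvexOn ℝ Set.univ F) {x gx : E}
    (hgrad : HasGradientAt F gx x) (hsmooth : ∀ y, F (x + y) ≤ F x + ⟪gx, y⟫ + L / 2 * ‖y‖ ^ 2)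
    (z w : E) : F w ≤ F z + ⟪gx, w - z⟫ + L / 2 * ‖w - x‖ ^ 2 := by
  have hupper := hsmooth (w - x)
  rw [add_sub_cancel] at hupper
  have hlower : F x + ⟪gx, z - x⟫ ≤ F z := hconv.add_fderiv_le hgrad.hasFDerivAt z
  have hsplit : ⟪gx, w - z⟫ = ⟪gx, w - x⟫ - ⟪gx, z - x⟫ := by
    rw [← inner_sub_right, sub_sub_sub_cancel_right]
  linarith

theorem ConvexOn.apply_smul_add_div_le (hconv : ConvexOn ℝ Set.univ F) (hF0 : F 0 ≤ 0)
    (hgrad : ∀ x, HasGradientAt F (g x) x)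
    (hsmooth : ∀ x y, F (x + y) ≤ F x + ⟪g x, y⟫ + L / 2 * ‖y‖ ^ 2)
    {η η' : ℝ} (hη' : 0 < η') (hη'η : η' ≤ η) {S s m : E}
    (hblackwell : ⟪g (η' • (S + m)), s⟫ ≤ 0) :
    F (η' • (S + s)) / η' ≤ F (η • S) / η + L / 2 * (η' * ‖s - m‖ ^ 2) := by
  have hη : 0 < η := hη'.trans_le hη'η
  have hround := hconv.apply_le_add_inner_add_sq_norm (hgrad (η' • (S + m)))
    (hsmooth (η' • (S + m))) (η' • S) (η' • (S + s))
  rw [smul_add, add_sub_cancel_left, ← smul_add, ← smul_sub, add_sub_add_left_eq_sub,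
    real_inner_smul_right, norm_smul, mul_pow, Real.norm_eq_abs, sq_abs] at hround
  have hshrink : F (η' • S) ≤ η' / η * F (η • S) := by
    have := hconv.apply_smul_le_smul_apply hF0 (div_nonneg hη'.le hη.le)
      (div_le_one_of_le₀ hη'η hη.le) (η • S)
    rwa [smul_smul, div_mul_cancel₀ _ hη.ne'] at this
  have hdrop : η' * ⟪g (η' • (S + m)), s⟫ ≤ 0 := mul_nonpos_of_nonneg_of_nonpos hη'.le hblackwell
  rw [div_le_iff₀ hη']
  have hrescale : η' / η * F (η • S) = F (η • S) / η * η' := by ring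
  linarith

theorem ConvexOn.apply_smul_partialSum_div_le (hconv : ConvexOn ℝ Set.univ F) (hF0 : F 0 ≤ 0)
    (hgrad : ∀ x, HasGradientAt F (g x) x)
    (hsmooth : ∀ x y, F (x + y) ≤ F x + ⟪g x, y⟫ + L / 2 * ‖y‖ ^ 2)
    {T : ℕ} {s m S : ℕ → E} (hS : ∀ t, S t = ∑ k ∈ Finset.Icc 1 t, s k)
    {η : ℕ → ℝ} (hηpos : ∀ t, 0 < η t) (hηdec : ∀ t, 1 ≤ t → η t ≤ η (t - 1))
    (hblackwell : ∀ t ∈ Finset.Icc 1 T, ⟪g (η t • (S (t - 1) + m t)), s t⟫ ≤ 0) :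
    ∀ t ≤ T, F (η t • S t) / η t ≤ L / 2 * ∑ k ∈ Finset.Icc 1 t, η k * ‖s k - m k‖ ^ 2 := by
  intro t
  induction t with
  | zero =>
    intro _
    simpa [hS] using div_nonpos_of_nonpos_of_nonneg hF0 (hηpos 0).le
  | succ t ih =>
    intro ht
    have hSsucc : S (t + 1) = S t + s (t + 1) := by
      rw [hS, hS, Finset.sum_Icc_succ_top (Nat.le_add_left 1 t)]
    have hround := hconv.apply_smul_add_div_le hF0 hgrad hsmooth (hηpos (t + 1))
      (hηdec (t + 1) (Nat.le_add_left 1 t))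
      (hblackwell (t + 1) (Finset.mem_Icc.2 ⟨Nat.le_add_left 1 t, ht⟩))
    rw [Nat.add_sub_cancel] at hround
    rw [Finset.sum_Icc_succ_top (Nat.le_add_left 1 t), hSsucc]
    linarith [ih (Nat.le_of_succ_le ht)]

end

theorem stmt_3 {n : ℕ} (T : ℕ)
    (F : EuclideanSpace ℝ (Fin n) → ℝ) (g : EuclideanSpace ℝ (Fin n) → EuclideanSpace ℝ (Fin n))
    (hdiff : ∀ x, HasGradientAt F (g x) x)
    (hconv : ConvexOn ℝ Set.univ F) (hF0 : F 0 ≤ 0) (L : ℝ)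
    (hsmooth : ∀ x y, F (x + y) ≤ F x + ⟪g x, y⟫ + L / 2 * ‖y‖ ^ 2)
    (s m : ℕ → EuclideanSpace ℝ (Fin n))
    (S : ℕ → EuclideanSpace ℝ (Fin n))
    (hS : ∀ t, S t = ∑ k ∈ Finset.Icc 1 t, s k)
    (η : ℕ → ℝ) (hηpos : ∀ t, 0 < η t) (hηdec : ∀ t, 1 ≤ t → η t ≤ η (t - 1))
    (hblackwell : ∀ t ∈ Finset.Icc 1 T, ⟪g (η t • (S (t - 1) + m t)), s t⟫ ≤ 0) :
    F (η T • S T) ≤ L / 2 * ∑ t ∈ Finset.Icc 1 T, η T * η t * ‖s t - m t‖ ^ 2 := by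
  have hpotential := hconv.apply_smul_partialSum_div_le hF0 hdiff hsmooth hS hηpos hηdec
    hblackwell T le_rfl
  rw [div_le_iff₀ (hηpos T)] at hpotential
  calc F (η T • S T) ≤ L / 2 * (∑ t ∈ Finset.Icc 1 T, η t * ‖s t - m t‖ ^ 2) * η T := hpotential
    _ = L / 2 * ∑ t ∈ Finset.Icc 1 T, η T * η t * ‖s t - m t‖ ^ 2 := by
      rw [mul_assoc, Finset.sum_mul]
      exact congrArg _ (Finset.sum_congr rfl fun _ _ => by ring)
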